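/- arXiv:1010.0846 — 2 statements merged into one kernel-verified Lean document; each statement's English description precedes it below -/
import Mathlib

section
/- For any relation f ⊆ 𝒳×𝒴×𝒵 on finite sets, any distribution μ on 𝒳×𝒴, any S ⊆ 𝒵 and any ε > 0, one has crent^{2,μ}_ε(f,S) ≤ 2·ment^{2,μ}_ε(f,S); consequently, crent²_ε(f) := sup_{μ,S} ess^μ(f,S)·crent^{2,μ}_ε(f,S) ≤ 2·sup_{μ,S} ess^μ(f,S)·ment^{2,μ}_ε(f,S) =: 2·ment²_ε(f). -/
open scoped BigOperators ENNReal
open Classical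

noncomputable section

/-- `p` is a probability distribution on the finite type `α`. -/
def IsDist {α : Type*} [Fintype α] (p : α → ℝ) : Prop :=
  (∀ a, 0 ≤ p a) ∧ ∑ a, p a = 1

/-- Relative entropy (base 2) `S(p‖q)`. -/
def relEnt {α : Type*} [Fintype α] (p q : α → ℝ) : ℝ :=
  ∑ a, if 0 < p a then p a * Real.logb 2 (p a / q a) else 0

/-- Relative min-entropy `S∞(p‖q) = max_{a : p a > 0} log (p a / q a)`. -/
def relMinEnt {α : Type*} [Fintype α] (p q : α → ℝ) : ℝ :=
  sSup {r | ∃ a, 0 < p a ∧ r = Real.logb 2 (p a / q a)}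

/-- Marginal on the first component. -/
def margX {α β : Type*} [Fintype α] [Fintype β] (p : α × β → ℝ) : α → ℝ :=
  fun x => ∑ y, p (x, y)

/-- Marginal on the second component. -/
def margY {α β : Type*} [Fintype α] [Fintype β] (p : α × β → ℝ) : β → ℝ :=
  fun y => ∑ x, p (x, y)

/-- Conditional distribution of the second component given the first equals `x`. -/
def condY {α β : Type*} [Fintype α] [Fintype β] (p : α × β → ℝ) (x : α) : β → ℝ :=
  fun y => p (x, y) / margX p x

/-- Conditional distribution of the first component given the second equals `y`. -/
def condX {α β : Type*} [Fintype α] [Fintype β] (p : α × β → ℝ) (y : β) : α → ℝ :=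
  fun x => p (x, y) / margY p y

/-- `crent^μ_𝒳(λ) = E_{x←X₁} S((Y₁)_x ‖ Y_x)`. -/
def crentX {α β : Type*} [Fintype α] [Fintype β] (lam mu : α × β → ℝ) : ℝ :=
  ∑ x, margX lam x * relEnt (condY lam x) (condY mu x)

/-- `crent^μ_𝒴(λ) = E_{y←Y₁} S((X₁)_y ‖ X_y)`. -/
def crentY {α β : Type*} [Fintype α] [Fintype β] (lam mu : α × β → ℝ) : ℝ :=
  ∑ y, margY lam y * relEnt (condX lam y) (condX mu y)

/-- `λ` is one-way for `μ` with respect to `𝒳`: `λ(y|x) = μ(y|x)` on the support of `λ`. -/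
def OneWayX {α β : Type*} [Fintype α] [Fintype β] (lam mu : α × β → ℝ) : Prop :=
  ∀ x y, 0 < lam (x, y) → condY lam x y = condY mu x y

/-- `λ` is one-way for `μ` with respect to `𝒴`: `λ(x|y) = μ(x|y)` on the support of `λ`. -/
def OneWayY {α β : Type*} [Fintype α] [Fintype β] (lam mu : α × β → ℝ) : Prop :=
  ∀ x y, 0 < lam (x, y) → condX lam y x = condX mu y x

/-- `λ` is SM-like for `μ`. -/
def SMLike {α β : Type*} [Fintype α] [Fintype β] (lam mu : α × β → ℝ) : Prop :=
  ∃ θ : α × β → ℝ, IsDist θ ∧ OneWayX θ mu ∧ OneWayY lam θ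

/-- `err_{f,S}(λ) = min_{z ∈ S} Pr_{(x,y)←λ}[(x,y,z) ∉ f]`. -/
def errRel {α β γ : Type*} [Fintype α] [Fintype β] (f : Set (α × β × γ)) (S : Set γ)
    (lam : α × β → ℝ) : ℝ :=
  sInf {e | ∃ z ∈ S, e = ∑ p : α × β, if (p.1, p.2, z) ∉ f then lam p else 0}

/-- `ess^μ(f,S) = 1 − Pr_{(x,y)←μ}[∃ z ∉ S, (x,y,z) ∈ f]`. -/
def ess {α β γ : Type*} [Fintype α] [Fintype β] (f : Set (α × β × γ)) (S : Set γ)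
    (mu : α × β → ℝ) : ℝ :=
  1 - ∑ p : α × β, if ∃ z ∉ S, (p.1, p.2, z) ∈ f then mu p else 0

/-- The two-way `ε`-error conditional relative entropy bound `crent^{2,μ}_ε(f,S)`
(`+∞` if no feasible `λ` exists). -/
def crent2 {α β γ : Type*} [Fintype α] [Fintype β] (f : Set (α × β × γ)) (S : Set γ)
    (mu : α × β → ℝ) (ε : ℝ) : ℝ≥0∞ :=
  sInf {c | ∃ lam : α × β → ℝ, IsDist lam ∧ SMLike lam mu ∧ errRel f S lam ≤ ε ∧
    c = ENNReal.ofReal (crentX lam mu + crentY lam mu)}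

/-- The two-way `ε`-error relative min-entropy bound `ment^{2,μ}_ε(f,S)`
(`+∞` if no feasible `λ` exists). -/
def ment2 {α β γ : Type*} [Fintype α] [Fintype β] (f : Set (α × β × γ)) (S : Set γ)
    (mu : α × β → ℝ) (ε : ℝ) : ℝ≥0∞ :=
  sInf {c | ∃ lam : α × β → ℝ, IsDist lam ∧ SMLike lam mu ∧ errRel f S lam ≤ ε ∧
    c = ENNReal.ofReal (relMinEnt lam mu)}

/-- The `k`-fold product distribution `μ^k` on `𝒳^k × 𝒴^k`. -/
def prodDist {α β : Type*} [Fintype α] [Fintype β] (mu : α × β → ℝ) (k : ℕ) :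
    (Fin k → α) × (Fin k → β) → ℝ :=
  fun p => ∏ i, mu (p.1 i, p.2 i)

/-- The `k`-fold product relation `f^k`. -/
def relPow {α β γ : Type*} (f : Set (α × β × γ)) (k : ℕ) :
    Set ((Fin k → α) × (Fin k → β) × (Fin k → γ)) :=
  {p | ∀ i, (p.1 i, p.2.1 i, p.2.2 i) ∈ f}
/-- Gibbs' inequality: relative entropy is nonnegative. -/
lemma relEnt_nonneg' {α : Type*} [Fintype α] (p q : α → ℝ) (hp : ∀ a, 0 ≤ p a)
    (hq : ∀ a, 0 ≤ q a) (hs : ∑ a, q a ≤ ∑ a, p a)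
    (habs : ∀ a, 0 < p a → 0 < q a) : 0 ≤ relEnt p q := by
  have h2 : (0:ℝ) < Real.log 2 := Real.log_pos one_lt_two
  have hterm : ∀ a, (p a - q a) / Real.log 2 ≤
      (if 0 < p a then p a * Real.logb 2 (p a / q a) else 0) := by
    intro a
    by_cases hpa : 0 < p a
    · rw [if_pos hpa]
      have hqa := habs a hpa
      have h1 : Real.log (q a / p a) ≤ q a / p a - 1 :=
        Real.log_le_sub_one_of_pos (by positivity)
      have hlog : Real.log (p a / q a) = - Real.log (q a / p a) := by
        rw [← Real.log_inv, inv_div]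
      have hmain : p a - q a ≤ p a * (- Real.log (q a / p a)) := by
        have h3 := mul_le_mul_of_nonneg_left h1 hpa.le
        have h4 : p a * (q a / p a - 1) = q a - p a := by field_simp
        nlinarith
      have : p a * Real.logb 2 (p a / q a) = p a * (- Real.log (q a / p a)) / Real.log 2 := by
        rw [Real.logb, hlog]; ring
      rw [this]
      gcongr
    · rw [if_neg hpa]
      have hpa0 : p a = 0 := le_antisymm (not_lt.1 hpa) (hp a)
      rw [hpa0]
      apply div_nonpos_of_nonpos_of_nonneg
      · linarith [hq a]
      · exact h2.le
  calc (0:ℝ) ≤ (∑ a, p a - ∑ a, q a) / Real.log 2 := by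
        apply div_nonneg (by linarith) h2.le
    _ = ∑ a, (p a - q a) / Real.log 2 := by
        rw [← Finset.sum_sub_distrib, Finset.sum_div]
    _ ≤ ∑ a, (if 0 < p a then p a * Real.logb 2 (p a / q a) else 0) :=
        Finset.sum_le_sum fun a _ => hterm a
    _ = relEnt p q := rfl

/-- The key one-marginal bound: `crent^μ_𝒳(λ) ≤ S∞(λ‖μ)`. -/
lemma crentX_le_relMinEnt {α β : Type*} [Fintype α] [Fintype β] (lam mu : α × β → ℝ)
    (hlam : IsDist lam) (hmu : IsDist mu)
    (habs : ∀ p, 0 < lam p → 0 < mu p) :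
    crentX lam mu ≤ relMinEnt lam mu := by
  obtain ⟨hl, hls⟩ := hlam
  obtain ⟨hm, hms⟩ := hmu
  set M := relMinEnt lam mu with hM
  have hbdd : BddAbove {r | ∃ a, 0 < lam a ∧ r = Real.logb 2 (lam a / mu a)} := by
    apply Set.Finite.bddAbove
    apply (Set.finite_range (fun a : α × β => Real.logb 2 (lam a / mu a))).subset
    rintro r ⟨a, _, rfl⟩
    exact ⟨a, rfl⟩
  have hMle : ∀ a : α × β, 0 < lam a → Real.logb 2 (lam a / mu a) ≤ M :=
    fun a h => le_csSup hbdd ⟨a, h, rfl⟩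
  have hmargl : ∀ x, 0 ≤ margX lam x := fun x => Finset.sum_nonneg fun y _ => hl (x, y)
  have hmargm : ∀ x, 0 ≤ margX mu x := fun x => Finset.sum_nonneg fun y _ => hm (x, y)
  have hmargpos : ∀ x, 0 < margX lam x → ∃ y, 0 < lam (x, y) := by
    intro x hx
    by_contra h
    push_neg at h
    have : margX lam x = 0 := Finset.sum_eq_zero fun y _ => le_antisymm (h y) (hl (x, y))
    linarith
  have hmargabs : ∀ x, 0 < margX lam x → 0 < margX mu x := by
    intro x hx
    obtain ⟨y, hy⟩ := hmargpos x hx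
    calc (0:ℝ) < mu (x, y) := habs (x, y) hy
      _ ≤ margX mu x := Finset.single_le_sum (fun y _ => hm (x, y)) (Finset.mem_univ y)
  have key : ∀ x, margX lam x * relEnt (condY lam x) (condY mu x) ≤
      M * margX lam x -
        (if 0 < margX lam x then
          margX lam x * Real.logb 2 (margX lam x / margX mu x) else 0) := by
    intro x
    by_cases hx : 0 < margX lam x
    · rw [if_pos hx]
      have hLm0 : 0 < margX mu x := hmargabs x hx
      set c := Real.logb 2 (margX lam x / margX mu x) with hc
      have hterm : ∀ y, margX lam x *
          (if 0 < condY lam x y then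
            condY lam x y * Real.logb 2 (condY lam x y / condY mu x y) else 0)
          ≤ lam (x, y) * (M - c) := by
        intro y
        have hcy : condY lam x y = lam (x, y) / margX lam x := rfl
        have hcm : condY mu x y = mu (x, y) / margX mu x := rfl
        by_cases hy : 0 < lam (x, y)
        · have hcond : 0 < condY lam x y := by rw [hcy]; exact div_pos hy hx
          rw [if_pos hcond]
          have hmuy := habs (x, y) hy
          have hlogb : Real.logb 2 (condY lam x y / condY mu x y)
              = Real.logb 2 (lam (x, y) / mu (x, y)) - c := by
            rw [hcy, hcm, div_div_div_comm, hc,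
              Real.logb_div (by positivity) (by positivity)]
          rw [hlogb, hcy]
          have heq : margX lam x * (lam (x, y) / margX lam x *
              (Real.logb 2 (lam (x, y) / mu (x, y)) - c))
              = lam (x, y) * (Real.logb 2 (lam (x, y) / mu (x, y)) - c) := by
            field_simp
          rw [heq]
          exact mul_le_mul_of_nonneg_left (by linarith [hMle (x, y) hy]) hy.le
        · have h0 : lam (x, y) = 0 := le_antisymm (not_lt.1 hy) (hl (x, y))
          have hcond : ¬ 0 < condY lam x y := by rw [hcy, h0]; simp
          rw [if_neg hcond, h0]
          simp
      calc margX lam x * relEnt (condY lam x) (condY mu x)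
          = ∑ y, margX lam x *
            (if 0 < condY lam x y then
              condY lam x y * Real.logb 2 (condY lam x y / condY mu x y) else 0) := by
            rw [relEnt, Finset.mul_sum]
        _ ≤ ∑ y, lam (x, y) * (M - c) := Finset.sum_le_sum fun y _ => hterm y
        _ = margX lam x * (M - c) := by rw [← Finset.sum_mul]; rfl
        _ = M * margX lam x - margX lam x * c := by ring
    · have hx0 : margX lam x = 0 := le_antisymm (not_lt.1 hx) (hmargl x)
      rw [if_neg hx, hx0]
      simp
  have hsum : crentX lam mu ≤ M * (∑ x, margX lam x) - relEnt (margX lam) (margX mu) := by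
    rw [crentX, relEnt, Finset.mul_sum, ← Finset.sum_sub_distrib]
    exact Finset.sum_le_sum fun x _ => key x
  have hm1 : ∑ x, margX lam x = 1 := by
    rw [← hls, Fintype.sum_prod_type]; rfl
  have hm2 : ∑ x, margX mu x = 1 := by
    rw [← hms, Fintype.sum_prod_type]; rfl
  have hrel := relEnt_nonneg' (margX lam) (margX mu) hmargl hmargm
    (le_of_eq (hm2.trans hm1.symm)) hmargabs
  rw [hm1] at hsum
  linarith

lemma relMinEnt_swap {α β : Type*} [Fintype α] [Fintype β] (lam mu : α × β → ℝ) :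
    relMinEnt (fun p : β × α => lam (p.2, p.1)) (fun p : β × α => mu (p.2, p.1))
      = relMinEnt lam mu := by
  unfold relMinEnt
  congr 1
  ext r
  constructor
  · rintro ⟨⟨y, x⟩, h, rfl⟩
    exact ⟨(x, y), h, rfl⟩
  · rintro ⟨⟨x, y⟩, h, rfl⟩
    exact ⟨(y, x), h, rfl⟩

lemma crentY_le_relMinEnt {α β : Type*} [Fintype α] [Fintype β] (lam mu : α × β → ℝ)
    (hlam : IsDist lam) (hmu : IsDist mu)
    (habs : ∀ p, 0 < lam p → 0 < mu p) :
    crentY lam mu ≤ relMinEnt lam mu := by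
  have hswapsum : ∀ (g : α × β → ℝ), ∑ p : β × α, g (p.2, p.1) = ∑ p : α × β, g p :=
    fun g => Fintype.sum_equiv (Equiv.prodComm β α) _ _ (fun p => rfl)
  have h1 := crentX_le_relMinEnt (fun p : β × α => lam (p.2, p.1))
    (fun p : β × α => mu (p.2, p.1))
    ⟨fun p => hlam.1 _, by rw [hswapsum]; exact hlam.2⟩
    ⟨fun p => hmu.1 _, by rw [hswapsum]; exact hmu.2⟩
    (fun p hp => habs (p.2, p.1) hp)
  rw [relMinEnt_swap] at h1
  exact h1

lemma smlike_abs {α β : Type*} [Fintype α] [Fintype β] (lam mu : α × β → ℝ)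
    (hlam : IsDist lam) (hmu : IsDist mu) (h : SMLike lam mu) :
    ∀ p, 0 < lam p → 0 < mu p := by
  obtain ⟨θ, ⟨hθ0, hθs⟩, hθX, hLY⟩ := h
  rintro ⟨x, y⟩ hxy
  have hmY : 0 < margY lam y :=
    lt_of_lt_of_le hxy (Finset.single_le_sum (fun x _ => hlam.1 (x, y)) (Finset.mem_univ x))
  have h1 : 0 < condX lam y x := div_pos hxy hmY
  have h2 : 0 < condX θ y x := (hLY x y hxy) ▸ h1
  have hθxy : 0 < θ (x, y) := by
    by_contra hcon
    have hz : θ (x, y) = 0 := le_antisymm (not_lt.1 hcon) (hθ0 (x, y))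
    have : condX θ y x = 0 := by unfold condX; rw [hz, zero_div]
    rw [this] at h2
    exact lt_irrefl _ h2
  have h3 : 0 < condY θ x y := div_pos hθxy
    (lt_of_lt_of_le hθxy (Finset.single_le_sum (fun y _ => hθ0 (x, y)) (Finset.mem_univ y)))
  have h4 : 0 < condY mu x y := (hθX x y hθxy) ▸ h3
  by_contra hcon
  have hz : mu (x, y) = 0 := le_antisymm (not_lt.1 hcon) (hmu.1 (x, y))
  have : condY mu x y = 0 := by unfold condY; rw [hz, zero_div]
  rw [this] at h4
  exact lt_irrefl _ h4

lemma crent2_le_aux {α β γ : Type*} [Fintype α] [Fintype β] [Fintype γ]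
    (f : Set (α × β × γ)) (S : Set γ) (mu : α × β → ℝ) (hmu : IsDist mu) (ε : ℝ) :
    crent2 f S mu ε ≤ 2 * ment2 f S mu ε := by
  rw [ment2, sInf_eq_iInf', ENNReal.mul_iInf_of_ne (by norm_num) (by norm_num)]
  refine le_iInf fun b => ?_
  obtain ⟨lam, hld, hsm, herr, hc⟩ := b.2
  have habs := smlike_abs lam mu hld hmu hsm
  have hX := crentX_le_relMinEnt lam mu hld hmu habs
  have hY := crentY_le_relMinEnt lam mu hld hmu habs
  calc crent2 f S mu ε ≤ ENNReal.ofReal (crentX lam mu + crentY lam mu) :=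
        sInf_le ⟨lam, hld, hsm, herr, rfl⟩
    _ ≤ ENNReal.ofReal (2 * relMinEnt lam mu) :=
        ENNReal.ofReal_le_ofReal (by linarith)
    _ = 2 * ENNReal.ofReal (relMinEnt lam mu) := by
        rw [ENNReal.ofReal_mul (by norm_num)]
        norm_num
    _ = 2 * ↑b := by rw [hc]
/-- `crent^{2,μ}_ε(f,S) ≤ 2·ment^{2,μ}_ε(f,S)`, and consequently
`crent²_ε(f) ≤ 2·ment²_ε(f)`, where the outer quantities are suprema of
`ess^μ(f,S) · (bound)` over all distributions `μ` and all `S ⊆ 𝒵`. -/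
theorem crent2_le_two_ment2 {α β γ : Type*} [Fintype α] [Fintype β] [Fintype γ]
    (f : Set (α × β × γ)) (mu : α × β → ℝ) (hmu : IsDist mu) (S : Set γ)
    (ε : ℝ) (hε : 0 < ε) :
    crent2 f S mu ε ≤ 2 * ment2 f S mu ε ∧
    (⨆ (mu' : α × β → ℝ) (_ : IsDist mu') (S' : Set γ),
        ENNReal.ofReal (ess f S' mu') * crent2 f S' mu' ε) ≤
      2 * ⨆ (mu' : α × β → ℝ) (_ : IsDist mu') (S' : Set γ),
        ENNReal.ofReal (ess f S' mu') * ment2 f S' mu' ε := by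
  constructor
  · exact crent2_le_aux f S mu hmu ε
  · rw [ENNReal.mul_iSup]
    refine iSup_le fun mu' => ?_
    refine iSup_le fun hmu' => ?_
    refine iSup_le fun S' => ?_
    refine le_iSup_of_le mu' ?_
    rw [ENNReal.mul_iSup]
    refine le_iSup_of_le hmu' ?_
    rw [ENNReal.mul_iSup]
    refine le_iSup_of_le S' ?_
    calc ENNReal.ofReal (ess f S' mu') * crent2 f S' mu' ε
        ≤ ENNReal.ofReal (ess f S' mu') * (2 * ment2 f S' mu' ε) :=
          mul_le_mul_right (crent2_le_aux f S' mu' hmu' ε) _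
      _ = 2 * (ENNReal.ofReal (ess f S' mu') * ment2 f S' mu' ε) := by ring

end
end

section
/- SM-likeness is preserved under conditioning on coordinates: Let μ be a distribution on 𝒳×𝒴 (finite sets), k a positive integer, and λ a distribution on 𝒳^k×𝒴^k that is SM-like for μ^k. Fix a coordinate j ∈ [k] and subsets A, B ⊆ [k]\{j} with A ∪ B = [k]\{j}, and fix values a ∈ 𝒳^A, b ∈ 𝒴^B such that the event {X_A = a and Y_B = b} has positive probability under (X,Y) ∼ λ. Then the joint distribution of (X_j, Y_j) under λ conditioned on {X_A = a, Y_B = b} is SM-like for μ. -/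
open scoped BigOperators ENNReal
open Classical

noncomputable section

/-- The joint distribution of `(X_j, Y_j)` under `λ` conditioned on
`{X_A = a, Y_B = b}` (where `a`, `b` are given as total functions whose values
matter only on `A`, resp. `B`). -/
def condCoord {α β : Type*} [Fintype α] [Fintype β] {k : ℕ}
    (lam : (Fin k → α) × (Fin k → β) → ℝ) (j : Fin k) (A B : Finset (Fin k))
    (a : Fin k → α) (b : Fin k → β) : α × β → ℝ :=
  fun q =>
    (∑ p : (Fin k → α) × (Fin k → β),
        if (∀ i ∈ A, p.1 i = a i) ∧ (∀ i ∈ B, p.2 i = b i) ∧ p.1 j = q.1 ∧ p.2 j = q.2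
        then lam p else 0) /
    (∑ p : (Fin k → α) × (Fin k → β),
        if (∀ i ∈ A, p.1 i = a i) ∧ (∀ i ∈ B, p.2 i = b i) then lam p else 0)


/-!
Unfolding both one-way conditions, `λ` is SM-like for `μ` exactly when
`λ(x,y) = f(x) g(y) μ(x,y)` for some nonnegative `f` and `g`. Apply this to `μ^k`:
`λ(X,Y) = F(X) G(Y) ∏ᵢ μ(Xᵢ,Yᵢ)`. On the event `X_A = a, Y_B = b` every factor with `i ≠ j`
depends on one side only, namely `μ(aᵢ,Yᵢ)` for `i ∈ A` and `μ(Xᵢ,bᵢ)` for `i ∉ A` (so `i ∈ B`).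
Summing out all coordinates but `j` therefore leaves `f(x) g(y) μ(x,y)` again.
-/

open Finset

section OneWay

variable {α β : Type*} [Fintype α] [Fintype β]

lemma margX_nonneg {p : α × β → ℝ} (hp : 0 ≤ p) (x : α) : 0 ≤ margX p x :=
  sum_nonneg fun y _ => hp (x, y)

lemma le_margX {p : α × β → ℝ} (hp : 0 ≤ p) (x : α) (y : β) : p (x, y) ≤ margX p x :=
  single_le_sum (f := fun y => p (x, y)) (fun y _ => hp (x, y)) (mem_univ y)

lemma oneWayY_iff_oneWayX_swap {lam mu : α × β → ℝ} :
    OneWayY lam mu ↔ OneWayX (lam ∘ Prod.swap) (mu ∘ Prod.swap) :=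
  ⟨fun h y x => h x y, fun h x y => h y x⟩

lemma oneWayX_of_eq_mul {lam mu : α × β → ℝ} (f : α → ℝ)
    (h : ∀ x y, lam (x, y) = f x * mu (x, y)) : OneWayX lam mu := by
  intro x y hxy
  have hf : f x ≠ 0 := fun hf => by simp [h, hf] at hxy
  simp only [condY, margX, h, ← mul_sum]
  exact mul_div_mul_left _ _ hf

lemma oneWayY_of_eq_mul {lam mu : α × β → ℝ} (g : β → ℝ)
    (h : ∀ x y, lam (x, y) = g y * mu (x, y)) : OneWayY lam mu :=
  oneWayY_iff_oneWayX_swap.2 (oneWayX_of_eq_mul g fun y x => h x y)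

/-- Off the support of `λ(·|x)`, `μ(y|x) = 0` is forced because both conditional laws have
mass one and agree on that support. -/
lemma OneWayX.eq_mul {lam mu : α × β → ℝ} (h : OneWayX lam mu) (hlam : 0 ≤ lam) (hmu : 0 ≤ mu)
    (x : α) (y : β) : lam (x, y) = margX lam x / margX mu x * mu (x, y) := by
  set c := margX lam x / margX mu x
  have hle : ∀ y, lam (x, y) ≤ c * mu (x, y) := by
    intro y
    rcases (hlam (x, y)).eq_or_lt with h0 | hpos
    · rw [← h0]
      exact mul_nonneg (div_nonneg (margX_nonneg hlam x) (margX_nonneg hmu x)) (hmu _)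
    · have hm : 0 < margX lam x := hpos.trans_le (le_margX hlam x y)
      have hcond := h x y hpos
      rw [condY, condY, div_eq_iff hm.ne'] at hcond
      rw [hcond]
      exact (by ring : _ = _).le
  refine le_antisymm (hle y) (not_lt.1 fun hlt => ?_)
  rcases eq_or_ne (margX mu x) 0 with h0 | h0
  · simp only [c, h0, div_zero, zero_mul] at hlt
    exact (hlam (x, y)).not_gt hlt
  · have hsum : margX lam x < c * margX mu x := by
      rw [margX, margX, mul_sum]
      exact sum_lt_sum (fun y _ => hle y) ⟨y, mem_univ y, hlt⟩
    rw [div_mul_cancel₀ _ h0] at hsum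
    exact hsum.false

lemma OneWayY.eq_mul {lam mu : α × β → ℝ} (h : OneWayY lam mu) (hlam : 0 ≤ lam) (hmu : 0 ≤ mu)
    (x : α) (y : β) : lam (x, y) = margY lam y / margY mu y * mu (x, y) :=
  OneWayX.eq_mul (oneWayY_iff_oneWayX_swap.1 h) (fun q => hlam q.swap) (fun q => hmu q.swap) y x

def IsProductReweighting (lam mu : α × β → ℝ) : Prop :=
  ∃ (f : α → ℝ) (g : β → ℝ), 0 ≤ f ∧ 0 ≤ g ∧ ∀ x y, lam (x, y) = f x * g y * mu (x, y)

theorem smLike_iff_isProductReweighting {lam mu : α × β → ℝ} (hlam : IsDist lam)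
    (hmu : 0 ≤ mu) : SMLike lam mu ↔ IsProductReweighting lam mu := by
  constructor
  · rintro ⟨θ, hθ, hθmu, hlamθ⟩
    refine ⟨fun x => margX θ x / margX mu x, fun y => margY lam y / margY θ y,
      fun x => div_nonneg (margX_nonneg hθ.1 x) (margX_nonneg hmu x),
      fun y => div_nonneg (sum_nonneg fun x _ => hlam.1 _) (sum_nonneg fun x _ => hθ.1 _),
      fun x y => ?_⟩
    rw [hlamθ.eq_mul hlam.1 hθ.1, hθmu.eq_mul hθ.1 hmu]
    ring
  · rintro ⟨f, g, hf, -, h⟩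
    set θ : α × β → ℝ := fun q => f q.1 * mu q
    have hθ : 0 ≤ θ := fun q => mul_nonneg (hf q.1) (hmu q)
    have hZ : 0 < ∑ q, θ q := by
      obtain ⟨q, -, hq⟩ := exists_ne_zero_of_sum_ne_zero (hlam.2 ▸ one_ne_zero)
      refine sum_pos' (fun q _ => hθ q) ⟨q, mem_univ q, (hθ q).lt_of_ne fun hθq => hq ?_⟩
      rw [h, mul_right_comm]
      exact mul_eq_zero_of_left hθq.symm _
    refine ⟨fun q => θ q / ∑ q, θ q,
      ⟨fun q => div_nonneg (hθ q) hZ.le, by rw [← sum_div, div_self hZ.ne']⟩,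
      oneWayX_of_eq_mul (fun x => f x / ∑ q, θ q) fun x y => by ring,
      oneWayY_of_eq_mul (fun y => g y * ∑ q, θ q) fun x y => ?_⟩
    rw [h]
    field_simp
    ring

end OneWay

section Coordinates

variable {α β : Type*} [Fintype α] [Fintype β] {mu : α × β → ℝ} {k : ℕ} {j : Fin k}
  {A B : Finset (Fin k)} {a : Fin k → α} {b : Fin k → β}

lemma prodDist_nonneg (hmu : 0 ≤ mu) (k : ℕ) : 0 ≤ prodDist mu k :=
  fun _ => prod_nonneg fun _ _ => hmu _

lemma prodDist_eq_of_agree (hAB : univ.erase j ⊆ A ∪ B) {X : Fin k → α} {Y : Fin k → β}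
    (hX : ∀ i ∈ A, X i = a i) (hY : ∀ i ∈ B, Y i = b i) :
    prodDist mu k (X, Y) = mu (X j, Y j) * (∏ i ∈ univ.erase j with i ∉ A, mu (X i, b i)) *
      ∏ i ∈ univ.erase j with i ∈ A, mu (a i, Y i) := by
  rw [prodDist, ← mul_prod_erase _ _ (mem_univ j), mul_assoc,
    ← prod_filter_not_mul_prod_filter _ (· ∈ A)]
  congr 2 <;> refine prod_congr rfl fun i hi => ?_ <;> rw [mem_filter] at hi <;> dsimp only
  · rw [hY i ((mem_union.1 (hAB hi.1)).resolve_left hi.2)]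
  · rw [hX i hi.2]

lemma ite_mul_prodDist_eq (hAB : univ.erase j ⊆ A ∪ B) (F : (Fin k → α) → ℝ)
    (G : (Fin k → β) → ℝ) (x : α) (y : β) (X : Fin k → α) (Y : Fin k → β) :
    (if (∀ i ∈ A, X i = a i) ∧ (∀ i ∈ B, Y i = b i) ∧ X j = x ∧ Y j = y
      then F X * G Y * prodDist mu k (X, Y) else 0) =
    (if (∀ i ∈ A, X i = a i) ∧ X j = x
      then F X * ∏ i ∈ univ.erase j with i ∉ A, mu (X i, b i) else 0) *
    (if (∀ i ∈ B, Y i = b i) ∧ Y j = y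
      then G Y * ∏ i ∈ univ.erase j with i ∈ A, mu (a i, Y i) else 0) * mu (x, y) := by
  by_cases hX : (∀ i ∈ A, X i = a i) ∧ X j = x
  · by_cases hY : (∀ i ∈ B, Y i = b i) ∧ Y j = y
    · rw [if_pos ⟨hX.1, hY.1, hX.2, hY.2⟩, if_pos hX, if_pos hY,
        prodDist_eq_of_agree hAB hX.1 hY.1, hX.2, hY.2]
      ring
    · rw [if_neg fun h => hY ⟨h.2.1, h.2.2.2⟩, if_neg hY, mul_zero, zero_mul]
  · rw [if_neg fun h => hX ⟨h.1, h.2.2.1⟩, if_neg hX, zero_mul, zero_mul]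

theorem IsProductReweighting.condCoord {lam : (Fin k → α) × (Fin k → β) → ℝ}
    (h : IsProductReweighting lam (prodDist mu k)) (hmu : 0 ≤ mu)
    (hAB : univ.erase j ⊆ A ∪ B) : IsProductReweighting (condCoord lam j A B a b) mu := by
  obtain ⟨F, G, hF, hG, hlam⟩ := h
  have hlam₀ : 0 ≤ lam := fun p => hlam p.1 p.2 ▸
    mul_nonneg (mul_nonneg (hF _) (hG _)) (prodDist_nonneg hmu k _)
  set D := ∑ p : (Fin k → α) × (Fin k → β),
    if (∀ i ∈ A, p.1 i = a i) ∧ (∀ i ∈ B, p.2 i = b i) then lam p else 0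
  have hD : 0 ≤ D := sum_nonneg fun p _ => ite_nonneg (hlam₀ p) le_rfl
  set f : α → ℝ := fun x => ∑ X : Fin k → α, if (∀ i ∈ A, X i = a i) ∧ X j = x
    then F X * ∏ i ∈ univ.erase j with i ∉ A, mu (X i, b i) else 0
  set g : β → ℝ := fun y => ∑ Y : Fin k → β, if (∀ i ∈ B, Y i = b i) ∧ Y j = y
    then G Y * ∏ i ∈ univ.erase j with i ∈ A, mu (a i, Y i) else 0
  refine ⟨fun x => f x / D, g,
    fun x => div_nonneg (sum_nonneg fun X _ =>
      ite_nonneg (mul_nonneg (hF X) (prod_nonneg fun i _ => hmu _)) le_rfl) hD,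
    fun y => sum_nonneg fun Y _ =>
      ite_nonneg (mul_nonneg (hG Y) (prod_nonneg fun i _ => hmu _)) le_rfl,
    fun x y => ?_⟩
  have hnum : (∑ p : (Fin k → α) × (Fin k → β),
      if (∀ i ∈ A, p.1 i = a i) ∧ (∀ i ∈ B, p.2 i = b i) ∧ p.1 j = x ∧ p.2 j = y
      then lam p else 0) = f x * g y * mu (x, y) := by
    simp only [Fintype.sum_prod_type, hlam, ite_mul_prodDist_eq hAB, ← sum_mul, f, g,
      sum_mul_sum]
  change _ / D = _
  rw [hnum]
  ring

lemma isDist_condCoord {lam : (Fin k → α) × (Fin k → β) → ℝ} (hlam : 0 ≤ lam)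
    (hpos : 0 < ∑ p : (Fin k → α) × (Fin k → β),
      if (∀ i ∈ A, p.1 i = a i) ∧ (∀ i ∈ B, p.2 i = b i) then lam p else 0) :
    IsDist (condCoord lam j A B a b) := by
  refine ⟨fun q => div_nonneg (sum_nonneg fun p _ => ite_nonneg (hlam p) le_rfl) hpos.le, ?_⟩
  simp only [condCoord, ← sum_div]
  rw [sum_comm, div_eq_one_iff_eq hpos.ne']
  refine sum_congr rfl fun p _ => ?_
  simp only [Fintype.sum_prod_type, ite_and]
  split_ifs <;> simp

end Coordinates

theorem smLike_condCoord_general {α β : Type*} [Fintype α] [Fintype β]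
    (mu : α × β → ℝ) (hmu : IsDist mu) (k : ℕ)
    (lam : (Fin k → α) × (Fin k → β) → ℝ) (hlam : IsDist lam)
    (hsm : SMLike lam (prodDist mu k))
    (j : Fin k) (A B : Finset (Fin k))
    (hAB : A ∪ B = Finset.univ \ {j})
    (a : Fin k → α) (b : Fin k → β)
    (hpos : 0 < ∑ p : (Fin k → α) × (Fin k → β),
        if (∀ i ∈ A, p.1 i = a i) ∧ (∀ i ∈ B, p.2 i = b i) then lam p else 0) :
    SMLike (condCoord lam j A B a b) mu := by
  have hcover : univ.erase j ⊆ A ∪ B := by rw [hAB, sdiff_singleton_eq_erase]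
  rw [smLike_iff_isProductReweighting (isDist_condCoord hlam.1 hpos) hmu.1]
  exact ((smLike_iff_isProductReweighting hlam (prodDist_nonneg hmu.1 k)).1 hsm).condCoord
    hmu.1 hcover

/-- SM-likeness is preserved under conditioning on coordinates:
if `λ` on `𝒳^k × 𝒴^k` is SM-like for `μ^k`, `j ∈ [k]`, `A, B ⊆ [k]∖{j}` with
`A ∪ B = [k]∖{j}`, and the event `{X_A = a, Y_B = b}` has positive probability
under `λ`, then the conditional distribution of `(X_j, Y_j)` is SM-like for `μ`. -/
theorem smLike_condCoord {α β : Type*} [Fintype α] [Fintype β]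
    (mu : α × β → ℝ) (hmu : IsDist mu) (k : ℕ) (hk : 0 < k)
    (lam : (Fin k → α) × (Fin k → β) → ℝ) (hlam : IsDist lam)
    (hsm : SMLike lam (prodDist mu k))
    (j : Fin k) (A B : Finset (Fin k))
    (hA : A ⊆ Finset.univ \ {j}) (hB : B ⊆ Finset.univ \ {j})
    (hAB : A ∪ B = Finset.univ \ {j})
    (a : Fin k → α) (b : Fin k → β)
    (hpos : 0 < ∑ p : (Fin k → α) × (Fin k → β),
        if (∀ i ∈ A, p.1 i = a i) ∧ (∀ i ∈ B, p.2 i = b i) then lam p else 0) :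
    SMLike (condCoord lam j A B a b) mu :=
  smLike_condCoord_general mu hmu k lam hlam hsm j A B hAB a b hpos
end
end
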